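/- arXiv:2207.00391 — 6 statements merged into one kernel-verified Lean document; each statement's English description precedes it below -/
import Mathlib

section
/- Let f⁰ be L₂-smooth and suppose at iterate x_t we have ∇f⁰(x_t) ≠ 0 and ∇f¹(x_t) ≠ 0. Let C_t = ‖∇f¹(x_t)‖/‖∇f⁰(x_t)‖ and α_t be the angle between ∇f⁰(x_t) and ∇f¹(x_t) (so ⟨∇f⁰(x_t), ∇f¹(x_t)⟩ = cos(α_t)‖∇f⁰(x_t)‖‖∇f¹(x_t)‖). If x_{t+1} = x_t - η_t(∇f⁰(x_t) + ∇f¹(x_t)), then f⁰(x_{t+1}) ≤ f⁰(x_t) - η_t(1 + cos(α_t)C_t - (1 + C_t²)L₂η_t)‖∇f⁰(x_t)‖². -/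
/-!
Descent lemma: `f y ≤ f x + ⟪∇f x, y - x⟫ + L/2 ‖y - x‖²`, since by the Lipschitz bound on `∇f`
the derivative of `s ↦ f (x + s (y - x))` on `[0, 1]` is dominated by that of the quadratic
majorant. For the step `y - x = -η (g₀ + g₁)` it gives the claim after
`‖g₀ + g₁‖² ≤ 2 (‖g₀‖² + ‖g₁‖²)`, `⟪g₀, g₁⟫ = cos α · C ‖g₀‖²` and `‖g₁‖² = C² ‖g₀‖²`.
-/

open RealInnerProductSpace InnerProductGeometry Set

section Descent

variable {F : Type*} [NormedAddCommGroup F] [InnerProductSpace ℝ F] [CompleteSpace F]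
  {f : F → ℝ} {L : NNReal}

lemma Differentiable.hasDerivAt_apply_add_smul (hf : Differentiable ℝ f) (x v : F) (s : ℝ) :
    HasDerivAt (fun s : ℝ => f (x + s • v)) ⟪gradient f (x + s • v), v⟫ s := by
  have hline : HasDerivAt (fun s : ℝ => x + s • v) v s := by
    simpa using ((hasDerivAt_id s).smul_const v).const_add x
  simpa [Function.comp_def] using
    (hf _).hasGradientAt.hasFDerivAt.comp_hasDerivAt s hline

lemma LipschitzWith.inner_gradient_add_smul_le (hlip : LipschitzWith L (gradient f))
    (x v : F) {s : ℝ} (hs : 0 ≤ s) :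
    ⟪gradient f (x + s • v), v⟫ ≤ ⟪gradient f x, v⟫ + L * s * ‖v‖ ^ 2 := by
  have hdist : ‖gradient f (x + s • v) - gradient f x‖ ≤ L * (s * ‖v‖) := by
    simpa [dist_eq_norm, norm_smul, abs_of_nonneg hs] using hlip.dist_le_mul (x + s • v) x
  have := (real_inner_le_norm _ v).trans (mul_le_mul_of_nonneg_right hdist (norm_nonneg v))
  rw [inner_sub_left] at this
  linarith

theorem Differentiable.apply_le_of_lipschitzWith_gradient (hf : Differentiable ℝ f)
    (hlip : LipschitzWith L (gradient f)) (x y : F) :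
    f y ≤ f x + ⟪gradient f x, y - x⟫ + L / 2 * ‖y - x‖ ^ 2 := by
  set v := y - x
  have hmajorant : ∀ s : ℝ,
      HasDerivAt (fun s : ℝ => f x + s * ⟪gradient f x, v⟫ + L / 2 * s ^ 2 * ‖v‖ ^ 2)
        (⟪gradient f x, v⟫ + L * s * ‖v‖ ^ 2) s := by
    intro s
    have hlin := ((hasDerivAt_id' s).mul_const ⟪gradient f x, v⟫).const_add (f x)
    have hquad := ((hasDerivAt_pow 2 s).const_mul ((L : ℝ) / 2)).mul_const (‖v‖ ^ 2)
    exact (hlin.add hquad).congr_deriv (by push_cast; ring)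
  have hle := image_le_of_deriv_right_le_deriv_boundary (a := 0) (b := 1)
    (fun s _ => (hf.hasDerivAt_apply_add_smul x v s).continuousAt.continuousWithinAt)
    (fun s _ => (hf.hasDerivAt_apply_add_smul x v s).hasDerivWithinAt)
    (by simp) (fun s _ => (hmajorant s).continuousAt.continuousWithinAt)
    (fun s _ => (hmajorant s).hasDerivWithinAt)
    (fun s hs => hlip.inner_gradient_add_smul_le x v hs.1) (right_mem_Icc.2 zero_le_one)
  simpa [v] using hle

lemma Differentiable.apply_sub_smul_le (hf : Differentiable ℝ f)
    (hlip : LipschitzWith L (gradient f)) (x d : F) (η : ℝ) :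
    f (x - η • d) ≤ f x - η * ⟪gradient f x, d⟫ + L / 2 * η ^ 2 * ‖d‖ ^ 2 := by
  have := hf.apply_le_of_lipschitzWith_gradient hlip x (x - η • d)
  rw [sub_sub_cancel_left, inner_neg_right, inner_smul_right, norm_neg, norm_smul,
    Real.norm_eq_abs, mul_pow, sq_abs] at this
  linarith

end Descent

lemma norm_add_sq_le_two_mul {E : Type*} [SeminormedAddCommGroup E] (u v : E) :
    ‖u + v‖ ^ 2 ≤ 2 * (‖u‖ ^ 2 + ‖v‖ ^ 2) :=
  (pow_le_pow_left₀ (norm_nonneg _) (norm_add_le u v) 2).trans add_sq_le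

theorem stmt1_general {m : ℕ} (f0 f1 : EuclideanSpace ℝ (Fin m) → ℝ) (L2 : ℝ) (hL2 : 0 ≤ L2)
    (hd0 : Differentiable ℝ f0)
    (hlip : LipschitzWith ⟨L2, hL2⟩ (gradient f0))
    (x : ℕ → EuclideanSpace ℝ (Fin m)) (η : ℕ → ℝ) (t : ℕ)
    (hg0 : gradient f0 (x t) ≠ 0)
    (C cosα : ℝ)
    (hC : C = ‖gradient f1 (x t)‖ / ‖gradient f0 (x t)‖)
    (hcos : cosα = ⟪gradient f0 (x t), gradient f1 (x t)⟫ /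
      (‖gradient f0 (x t)‖ * ‖gradient f1 (x t)‖))
    (hstep : x (t + 1) = x t - η t • (gradient f0 (x t) + gradient f1 (x t))) :
    f0 (x (t + 1)) ≤ f0 (x t)
      - η t * (1 + cosα * C - (1 + C ^ 2) * L2 * η t) * ‖gradient f0 (x t)‖ ^ 2 := by
  set g0 := gradient f0 (x t)
  set g1 := gradient f1 (x t)
  have hn0 : ‖g0‖ ≠ 0 := norm_ne_zero_iff.mpr hg0
  have hinner : ⟪g0, g1⟫ = cosα * C * ‖g0‖ ^ 2 := by
    rw [hcos, ← cos_angle, ← cos_angle_mul_norm_mul_norm, hC]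
    field_simp
  have hnorm : ‖g1‖ ^ 2 = C ^ 2 * ‖g0‖ ^ 2 := by
    rw [hC]
    field_simp
  rw [hstep]
  calc f0 (x t - η t • (g0 + g1))
      ≤ f0 (x t) - η t * ⟪g0, g0 + g1⟫ + L2 / 2 * η t ^ 2 * ‖g0 + g1‖ ^ 2 :=
        hd0.apply_sub_smul_le hlip (x t) (g0 + g1) (η t)
    _ ≤ f0 (x t) - η t * ⟪g0, g0 + g1⟫
          + L2 / 2 * η t ^ 2 * (2 * (‖g0‖ ^ 2 + ‖g1‖ ^ 2)) := by
        gcongr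
        exact norm_add_sq_le_two_mul g0 g1
    _ = _ := by rw [inner_add_right, real_inner_self_eq_norm_sq, hinner, hnorm]; ring

/-- Descent inequality for GD expressed through the angle `α_t` between the per-class
gradients and the norm ratio `C_t = ‖∇f1(x_t)‖ / ‖∇f0(x_t)‖`. -/
theorem stmt1 {m : ℕ} (f0 f1 : EuclideanSpace ℝ (Fin m) → ℝ) (L2 : ℝ) (hL2 : 0 ≤ L2)
    (hd0 : Differentiable ℝ f0) (hd1 : Differentiable ℝ f1)
    (hlip : LipschitzWith ⟨L2, hL2⟩ (gradient f0))
    (x : ℕ → EuclideanSpace ℝ (Fin m)) (η : ℕ → ℝ) (t : ℕ)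
    (hg0 : gradient f0 (x t) ≠ 0) (hg1 : gradient f1 (x t) ≠ 0)
    (C cosα : ℝ)
    (hC : C = ‖gradient f1 (x t)‖ / ‖gradient f0 (x t)‖)
    (hcos : cosα = ⟪gradient f0 (x t), gradient f1 (x t)⟫ /
      (‖gradient f0 (x t)‖ * ‖gradient f1 (x t)‖))
    (hstep : x (t + 1) = x t - η t • (gradient f0 (x t) + gradient f1 (x t))) :
    f0 (x (t + 1)) ≤ f0 (x t)
      - η t * (1 + cosα * C - (1 + C ^ 2) * L2 * η t) * ‖gradient f0 (x t)‖ ^ 2 :=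
  stmt1_general f0 f1 L2 hL2 hd0 hlip x η t hg0 C cosα hC hcos hstep
end

section
/- If a nonnegative sequence d_t satisfies d_{t+1} ≤ (t²/(t+1)²)·d_t + (8L₂/C²)·(1/(t+1)²) for all t ≥ 0 with L₂, C > 0, then d_T ≤ 8L₂/(C² T) for all T ≥ 1. -/
/-- Telescoping lemma: a nonnegative sequence satisfying
`d_{t+1} ≤ (t²/(t+1)²) d_t + (8 L₂ / C²) (1/(t+1)²)` obeys `d_T ≤ 8 L₂ / (C² T)`. -/
theorem stmt9 (d : ℕ → ℝ) (L2 C : ℝ) (hL2 : 0 < L2) (hC : 0 < C)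
    (hd : ∀ t, 0 ≤ d t)
    (hrec : ∀ t : ℕ, d (t + 1) ≤ ((t : ℝ) ^ 2 / ((t : ℝ) + 1) ^ 2) * d t
      + (8 * L2 / C ^ 2) * (1 / ((t : ℝ) + 1) ^ 2)) :
    ∀ T : ℕ, 1 ≤ T → d T ≤ 8 * L2 / (C ^ 2 * T) := by
  have key : ∀ T : ℕ, (T : ℝ) ^ 2 * d T ≤ (T : ℝ) * (8 * L2 / C ^ 2) := by
    intro T
    induction T with
    | zero => simp
    | succ t ih =>
      have hpos : (0:ℝ) < ((t : ℝ) + 1) ^ 2 := by positivity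
      have h := mul_le_mul_of_nonneg_left (hrec t) hpos.le
      push_cast
      calc ((t:ℝ) + 1) ^ 2 * d (t + 1)
          ≤ ((t:ℝ) + 1) ^ 2 * (((t : ℝ) ^ 2 / ((t : ℝ) + 1) ^ 2) * d t
            + (8 * L2 / C ^ 2) * (1 / ((t : ℝ) + 1) ^ 2)) := h
        _ = (t:ℝ) ^ 2 * d t + 8 * L2 / C ^ 2 := by field_simp
        _ ≤ (t:ℝ) * (8 * L2 / C ^ 2) + 8 * L2 / C ^ 2 := by linarith
        _ = ((t:ℝ) + 1) * (8 * L2 / C ^ 2) := by ring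
  intro T hT
  have hTpos : (0:ℝ) < (T : ℝ) := by exact_mod_cast hT
  have h := key T
  rw [le_div_iff₀ (by positivity)]
  have h' : (T:ℝ) ^ 2 * d T * C ^ 2 ≤ (T:ℝ) * (8 * L2) := by
    have h3 := mul_le_mul_of_nonneg_right h (by positivity : (0:ℝ) ≤ C ^ 2)
    have he : (T:ℝ) * (8 * L2 / C ^ 2) * C ^ 2 = (T:ℝ) * (8 * L2) := by
      field_simp
    linarith [h3, he]
  have h2 : d T * (C ^ 2 * T) * T ≤ 8 * L2 * T := by nlinarith [h']
  exact le_of_mul_le_mul_right h2 hTpos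
end

section
/- Let f⁰ be L₂-smooth, g⁰, g¹ nonzero stochastic gradient estimates, and x_{t+1} = x_t - η_t(g⁰/‖g⁰‖ + g¹/‖g¹‖). Writing (A) = -η_t⟨∇f⁰(x_t), g⁰/‖g⁰‖⟩ and (B) = -η_t⟨∇f⁰(x_t), g¹/‖g¹‖⟩, one has (A) ≤ η_t‖∇f⁰(x_t) - g⁰‖ - η_t‖g⁰‖ and (B) ≤ η_t‖∇f⁰(x_t) - g⁰‖ - η_t‖g⁰‖cos(∠(g⁰, g¹)), and consequently f⁰(x_{t+1}) ≤ f⁰(x_t) + 2η_t‖∇f⁰(x_t) - g⁰‖ - η_t‖g⁰‖(1 + cos β_t) + 2L₂η_t², where β_t = ∠(g⁰, g¹). -/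
set_option maxHeartbeats 1000000

open RealInnerProductSpace

lemma my_descent {F : Type*} [NormedAddCommGroup F] [InnerProductSpace ℝ F]
    [CompleteSpace F] (f : F → ℝ) (L : ℝ) (hL : 0 ≤ L)
    (hd : Differentiable ℝ f) (hlip : LipschitzWith ⟨L, hL⟩ (gradient f))
    (x v : F) :
    f (x + v) ≤ f x + ⟪gradient f x, v⟫ + L / 2 * ‖v‖ ^ 2 := by
  set h : ℝ → ℝ := fun s =>
    f (x + s • v) - s * ⟪gradient f x, v⟫ - L / 2 * s ^ 2 * ‖v‖ ^ 2 with hh_def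
  have hφ : ∀ s : ℝ, HasDerivAt (fun s : ℝ => f (x + s • v))
      ⟪gradient f (x + s • v), v⟫ s := by
    intro s
    have hc : HasDerivAt (fun s : ℝ => x + s • v) v s := by
      simpa using ((hasDerivAt_id s).smul_const v).const_add x
    have hg := (hd (x + s • v)).hasGradientAt
    have := hg.hasFDerivAt.comp_hasDerivAt s hc
    simpa [InnerProductSpace.toDual_apply_apply, Function.comp_def] using this
  have hh : ∀ s : ℝ, HasDerivAt h
      (⟪gradient f (x + s • v), v⟫ - ⟪gradient f x, v⟫ - L / 2 * (2 * s) * ‖v‖ ^ 2) s := by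
    intro s
    have h1 := (hφ s).sub (((hasDerivAt_id s).mul_const ⟪gradient f x, v⟫))
    have h2 := h1.sub ((((hasDerivAt_pow 2 s).const_mul (L / 2)).mul_const (‖v‖ ^ 2)))
    simpa [hh_def, Pi.sub_def, mul_comm, mul_assoc, mul_left_comm] using h2
  have hderiv_le : ∀ s ∈ Set.Ioo (0:ℝ) 1, deriv h s ≤ 0 := by
    intro s hs
    rw [(hh s).deriv]
    have hb : ⟪gradient f (x + s • v) - gradient f x, v⟫ ≤ L * s * ‖v‖ ^ 2 := by
      calc ⟪gradient f (x + s • v) - gradient f x, v⟫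
          ≤ ‖gradient f (x + s • v) - gradient f x‖ * ‖v‖ := real_inner_le_norm _ _
        _ ≤ (L * ‖s • v‖) * ‖v‖ := by
            have := hlip.dist_le_mul (x + s • v) x
            rw [dist_eq_norm, dist_eq_norm] at this
            have h' : (x + s • v) - x = s • v := by abel
            rw [h'] at this
            exact mul_le_mul_of_nonneg_right this (norm_nonneg v)
        _ = L * s * ‖v‖ ^ 2 := by
            rw [norm_smul, Real.norm_eq_abs, abs_of_pos hs.1]; ring
    have : ⟪gradient f (x + s • v), v⟫ - ⟪gradient f x, v⟫ ≤ L * s * ‖v‖ ^ 2 := by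
      rwa [← inner_sub_left]
    nlinarith [this]
  have hanti : AntitoneOn h (Set.Icc (0:ℝ) 1) := by
    apply antitoneOn_of_deriv_nonpos (convex_Icc 0 1)
    · exact fun s _ => ((hh s).differentiableAt).continuousAt.continuousWithinAt
    · exact fun s _ => ((hh s).differentiableAt).differentiableWithinAt
    · intro s hs
      exact hderiv_le s (by simpa using hs)
  have h10 : h 1 ≤ h 0 := hanti (by norm_num) (by norm_num) zero_le_one
  simp only [hh_def, one_smul, zero_smul, add_zero, one_pow, one_mul, zero_mul,
    mul_zero, sub_zero] at h10
  nlinarith [h10]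

/-- Per-step inequality in the PCNSGD analysis: with stochastic per-class gradient
estimates `g0, g1` and the per-class normalized step, the terms `(A)` and `(B)` are
bounded via Cauchy–Schwarz and the full inequality follows. -/
theorem stmt11 {m : ℕ} (f0 : EuclideanSpace ℝ (Fin m) → ℝ) (L2 : ℝ) (hL2 : 0 ≤ L2)
    (hd0 : Differentiable ℝ f0)
    (hlip : LipschitzWith ⟨L2, hL2⟩ (gradient f0))
    (x : ℕ → EuclideanSpace ℝ (Fin m)) (η : ℕ → ℝ) (t : ℕ)
    (hη : 0 ≤ η t)
    (g0 g1 : EuclideanSpace ℝ (Fin m)) (hg0 : g0 ≠ 0) (hg1 : g1 ≠ 0)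
    (cosβ : ℝ) (hcos : cosβ = ⟪g0, g1⟫ / (‖g0‖ * ‖g1‖))
    (hstep : x (t + 1) = x t - η t • (‖g0‖⁻¹ • g0 + ‖g1‖⁻¹ • g1)) :
    (f0 (x (t + 1)) ≤ f0 (x t) + 2 * η t * ‖gradient f0 (x t) - g0‖
        - η t * ‖g0‖ * (1 + cosβ) + 2 * L2 * (η t) ^ 2)
      ∧ (-(η t * ⟪gradient f0 (x t), ‖g0‖⁻¹ • g0⟫)
          ≤ η t * ‖gradient f0 (x t) - g0‖ - η t * ‖g0‖)
      ∧ (-(η t * ⟪gradient f0 (x t), ‖g1‖⁻¹ • g1⟫)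
          ≤ η t * ‖gradient f0 (x t) - g0‖ - η t * ‖g0‖ * cosβ) := by
  have hg0n : (0:ℝ) < ‖g0‖ := norm_pos_iff.mpr hg0
  have hg1n : (0:ℝ) < ‖g1‖ := norm_pos_iff.mpr hg1
  set G := gradient f0 (x t) with hG
  set u0 : EuclideanSpace ℝ (Fin m) := ‖g0‖⁻¹ • g0 with hu0
  set u1 : EuclideanSpace ℝ (Fin m) := ‖g1‖⁻¹ • g1 with hu1
  have hnu0 : ‖u0‖ = 1 := by rw [hu0, norm_smul, norm_inv, norm_norm, inv_mul_cancel₀ hg0n.ne']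
  have hnu1 : ‖u1‖ = 1 := by rw [hu1, norm_smul, norm_inv, norm_norm, inv_mul_cancel₀ hg1n.ne']
  -- inner products with g0
  have hGu0 : ⟪g0, u0⟫ = ‖g0‖ := by
    rw [hu0, real_inner_smul_right, real_inner_self_eq_norm_sq]
    field_simp
  have hGu1 : ⟪g0, u1⟫ = ‖g0‖ * cosβ := by
    rw [hu1, real_inner_smul_right, hcos]
    field_simp
  -- Cauchy–Schwarz bounds
  have hcs0 : -⟪G - g0, u0⟫ ≤ ‖G - g0‖ := by
    have := real_inner_le_norm (g0 - G) u0
    rw [hnu1] at *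
    calc -⟪G - g0, u0⟫ = ⟪g0 - G, u0⟫ := by rw [← inner_neg_left]; congr 1; abel
      _ ≤ ‖g0 - G‖ * ‖u0‖ := real_inner_le_norm _ _
      _ = ‖G - g0‖ := by rw [hnu0, norm_sub_rev]; ring
  have hcs1 : -⟪G - g0, u1⟫ ≤ ‖G - g0‖ := by
    calc -⟪G - g0, u1⟫ = ⟪g0 - G, u1⟫ := by rw [← inner_neg_left]; congr 1; abel
      _ ≤ ‖g0 - G‖ * ‖u1‖ := real_inner_le_norm _ _
      _ = ‖G - g0‖ := by rw [hnu1, norm_sub_rev]; ring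
  have hA : -(η t * ⟪G, u0⟫) ≤ η t * ‖G - g0‖ - η t * ‖g0‖ := by
    have hsplit : ⟪G, u0⟫ = ⟪G - g0, u0⟫ + ‖g0‖ := by
      rw [← hGu0, ← inner_add_left]; congr 1; abel
    have := mul_le_mul_of_nonneg_left hcs0 hη
    nlinarith [this]
  have hB : -(η t * ⟪G, u1⟫) ≤ η t * ‖G - g0‖ - η t * ‖g0‖ * cosβ := by
    have hsplit : ⟪G, u1⟫ = ⟪G - g0, u1⟫ + ‖g0‖ * cosβ := by
      rw [← hGu1, ← inner_add_left]; congr 1; abel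
    have := mul_le_mul_of_nonneg_left hcs1 hη
    nlinarith [this]
  refine ⟨?_, hA, hB⟩
  -- main inequality
  set v : EuclideanSpace ℝ (Fin m) := -(η t • (u0 + u1)) with hv
  have hx1 : x (t + 1) = x t + v := by rw [hstep, hv]; abel
  have hdesc := my_descent f0 L2 hL2 hd0 hlip (x t) v
  rw [← hx1] at hdesc
  have hinner : ⟪G, v⟫ = -(η t * ⟪G, u0⟫) + -(η t * ⟪G, u1⟫) := by
    rw [hv, inner_neg_right, real_inner_smul_right, inner_add_right]; ring
  have hnv : ‖v‖ ≤ 2 * η t := by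
    rw [hv, norm_neg, norm_smul, Real.norm_eq_abs, abs_of_nonneg hη]
    have : ‖u0 + u1‖ ≤ 2 := by
      calc ‖u0 + u1‖ ≤ ‖u0‖ + ‖u1‖ := norm_add_le _ _
        _ = 2 := by rw [hnu0, hnu1]; norm_num
    nlinarith
  have hq : L2 / 2 * ‖v‖ ^ 2 ≤ 2 * L2 * (η t) ^ 2 := by
    have h1 : ‖v‖ ^ 2 ≤ (2 * η t) ^ 2 := by
      have := norm_nonneg v
      nlinarith
    nlinarith
  rw [hinner] at hdesc
  have hexp : η t * ‖g0‖ * (1 + cosβ) = η t * ‖g0‖ + η t * ‖g0‖ * cosβ := by ring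
  linarith [hdesc, hq, hA, hB, hexp]
end

section
/- Let g, Z ∈ ℝᵐ with g ≠ 0, let n > 0, and set G = g + Z/√n. Assuming ‖Z‖/√n < ‖g‖ (so G ≠ 0), the projection of the unit vector G/‖G‖ onto g/‖g‖ satisfies ⟨G/‖G‖, g/‖g‖⟩ = 1 - ‖Z‖² sin²θ/(2n‖g‖²) + o(1/n) as n → ∞, where θ is the angle between Z and g. -/
/-!
Write `G = g + t • Z` with `t = 1/√n`. Shearing `G` along `g` does not change the Gram
determinant, so `‖G‖²‖g‖² - ⟪G, g⟫² = t² D` with `D = ‖Z‖²‖g‖² - ⟪Z, g⟫²`, and rationalising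
`1 - c/p = (p² - c²)/(p (p + c))` with `p = ‖G‖‖g‖`, `c = ⟪G, g⟫` turns this into
`1 - cos∠(G, g) = t² D / (p (p + c))`. As `t → 0` the denominator tends to `2‖g‖⁴`, which gives
the expansion to second order in `t`, i.e. to first order in `1/n`.
-/

open RealInnerProductSpace Filter Asymptotics Topology

lemma one_sub_div_eq_sq_sub_sq_div {p c : ℝ} (h : p * (p + c) ≠ 0) :
    1 - c / p = (p ^ 2 - c ^ 2) / (p * (p + c)) := by
  have hp : p ≠ 0 := left_ne_zero_of_mul h
  have hpc : p + c ≠ 0 := right_ne_zero_of_mul h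
  field_simp
  ring

lemma tendsto_inv_sqrt_atTop_zero : Tendsto (fun n : ℝ => (√n)⁻¹) atTop (𝓝 0) :=
  Real.tendsto_sqrt_atTop.inv_tendsto_atTop

section InnerProductSpace

variable {E : Type*} [NormedAddCommGroup E] [InnerProductSpace ℝ E]

lemma norm_add_smul_sq_mul_norm_sq_sub_inner_sq (x z : E) (t : ℝ) :
    ‖x + t • z‖ ^ 2 * ‖x‖ ^ 2 - ⟪x + t • z, x⟫ ^ 2
      = t ^ 2 * (‖z‖ ^ 2 * ‖x‖ ^ 2 - ⟪z, x⟫ ^ 2) := by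
  rw [norm_add_sq_real, inner_add_left, real_inner_smul_left, real_inner_smul_right, norm_smul,
    Real.norm_eq_abs, mul_pow, sq_abs, real_inner_self_eq_norm_sq, real_inner_comm x z]
  ring

lemma norm_sq_mul_one_sub_inner_div_sq (z x : E) (hx : x ≠ 0) :
    ‖z‖ ^ 2 * (1 - (⟪z, x⟫ / (‖z‖ * ‖x‖)) ^ 2) = (‖z‖ ^ 2 * ‖x‖ ^ 2 - ⟪z, x⟫ ^ 2) / ‖x‖ ^ 2 := by
  rcases eq_or_ne z 0 with rfl | hz
  · simp
  · have : ‖z‖ ≠ 0 := norm_ne_zero_iff.mpr hz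
    have : ‖x‖ ≠ 0 := norm_ne_zero_iff.mpr hx
    field_simp

lemma tendsto_norm_add_smul_mul_norm_mul_add_inner (x z : E) :
    Tendsto (fun t : ℝ => ‖x + t • z‖ * ‖x‖ * (‖x + t • z‖ * ‖x‖ + ⟪x + t • z, x⟫))
      (𝓝 0) (𝓝 (2 * ‖x‖ ^ 4)) := by
  have hcont : Continuous fun t : ℝ =>
      ‖x + t • z‖ * ‖x‖ * (‖x + t • z‖ * ‖x‖ + ⟪x + t • z, x⟫) := by fun_prop
  convert hcont.tendsto 0 using 2
  simp only [zero_smul, add_zero, real_inner_self_eq_norm_sq]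
  ring

theorem isLittleO_inner_add_smul_div_norm_mul_norm (x z : E) (hx : x ≠ 0) :
    (fun t : ℝ => ⟪x + t • z, x⟫ / (‖x + t • z‖ * ‖x‖)
        - (1 - t ^ 2 * (‖z‖ ^ 2 * ‖x‖ ^ 2 - ⟪z, x⟫ ^ 2) / (2 * ‖x‖ ^ 4)))
      =o[𝓝 0] (fun t : ℝ => t ^ 2) := by
  set D := ‖z‖ ^ 2 * ‖x‖ ^ 2 - ⟪z, x⟫ ^ 2
  set h : ℝ → ℝ := fun t => ‖x + t • z‖ * ‖x‖ * (‖x + t • z‖ * ‖x‖ + ⟪x + t • z, x⟫)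
  have hlim : Tendsto h (𝓝 0) (𝓝 (2 * ‖x‖ ^ 4)) :=
    tendsto_norm_add_smul_mul_norm_mul_add_inner x z
  have hlim_ne : 2 * ‖x‖ ^ 4 ≠ 0 := by positivity
  have herr : Tendsto (fun t => D * ((2 * ‖x‖ ^ 4)⁻¹ - (h t)⁻¹)) (𝓝 0) (𝓝 0) := by
    convert ((hlim.inv₀ hlim_ne).const_sub (2 * ‖x‖ ^ 4)⁻¹).const_mul D using 2
    rw [sub_self, mul_zero]
  have hfactor : (fun t : ℝ => ⟪x + t • z, x⟫ / (‖x + t • z‖ * ‖x‖)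
        - (1 - t ^ 2 * D / (2 * ‖x‖ ^ 4)))
      =ᶠ[𝓝 0] fun t => t ^ 2 * (D * ((2 * ‖x‖ ^ 4)⁻¹ - (h t)⁻¹)) := by
    filter_upwards [hlim.eventually_ne hlim_ne] with t ht
    have hrat := one_sub_div_eq_sq_sub_sq_div (c := ⟪x + t • z, x⟫) ht
    rw [mul_pow, norm_add_smul_sq_mul_norm_sq_sub_inner_sq] at hrat
    change _ = _ / h t at hrat
    linear_combination -hrat
  refine IsLittleO.congr' ?_ hfactor.symm EventuallyEq.rfl
  simpa using (isBigO_refl (fun t : ℝ => t ^ 2) (𝓝 0)).mul_isLittleO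
    ((isLittleO_one_iff ℝ).mpr herr)

end InnerProductSpace

/-- Directional noise of the normalized stochastic gradient (Eq. (proj)):
`⟨G/‖G‖, g/‖g‖⟩ = 1 - ‖Z‖² sin²θ / (2 n ‖g‖²) + o(1/n)` as `n → ∞`,
where `G = g + Z/√n` and `θ` is the angle between `Z` and `g`. -/
theorem stmt15 {m : ℕ} (g Z : EuclideanSpace ℝ (Fin m)) (hg : g ≠ 0)
    (cosθ : ℝ) (hcos : cosθ = ⟪Z, g⟫ / (‖Z‖ * ‖g‖)) :
    (fun n : ℝ =>
        ⟪‖g + (Real.sqrt n)⁻¹ • Z‖⁻¹ • (g + (Real.sqrt n)⁻¹ • Z), ‖g‖⁻¹ • g⟫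
          - (1 - ‖Z‖ ^ 2 * (1 - cosθ ^ 2) / (2 * n * ‖g‖ ^ 2)))
      =o[atTop] (fun n : ℝ => 1 / n) := by
  subst hcos
  have hexp := (isLittleO_inner_add_smul_div_norm_mul_norm g Z hg).comp_tendsto
    tendsto_inv_sqrt_atTop_zero
  refine hexp.congr' ?_ ?_ <;> filter_upwards [eventually_gt_atTop 0] with n hn
  · have ht : ((√n)⁻¹) ^ 2 = n⁻¹ := by rw [inv_pow, Real.sq_sqrt hn.le]
    simp only [Function.comp_apply, real_inner_smul_left, real_inner_smul_right, ht,
      norm_sq_mul_one_sub_inner_div_sq Z g hg]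
    field_simp
  · simp [inv_pow, Real.sq_sqrt hn.le]
end

section
/- Let g, Z ∈ ℝᵐ with g ≠ 0 and let G = g + εZ for small ε > 0 with ε‖Z‖ < ‖g‖. Then exactly: ⟨G, g⟩/(‖G‖‖g‖) ≥ 1 - ε²‖Z‖²/(2‖g‖²)·(1 - cos²θ)/(1 - ε‖Z‖/‖g‖)² , where cos θ = ⟨Z,g⟩/(‖Z‖‖g‖) (a non-asymptotic version of the directional-noise bound). -/
open RealInnerProductSpace

lemma stmt16_aux (a b s N : ℝ) (ha : 0 < a) (hb : 0 ≤ b) (hba : b < a)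
    (hs : |s| ≤ 1) (hN0 : 0 ≤ N) (hN2 : N ^ 2 = a ^ 2 + 2 * s * b * a + b ^ 2) :
    (a ^ 2 + s * b * a) / (N * a) ≥ 1 - b ^ 2 / (2 * a ^ 2) * (1 - s ^ 2) / (1 - b / a) ^ 2 := by
  obtain ⟨hs1, hs2⟩ := abs_le.mp hs
  set u : ℝ := a + s * b with hu_def
  have hu : 0 < u := by nlinarith
  have h1s : 0 ≤ 1 - s ^ 2 := by nlinarith
  have hv2 : 0 ≤ b ^ 2 * (1 - s ^ 2) := mul_nonneg (sq_nonneg b) h1s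
  have hN2' : N ^ 2 = u ^ 2 + b ^ 2 * (1 - s ^ 2) := by rw [hN2]; ring
  have hNpos : 0 < N := by nlinarith
  have hNle : N ≤ u + b ^ 2 * (1 - s ^ 2) / (2 * u) := by
    nlinarith [sq_nonneg (b ^ 2 * (1 - s ^ 2) / (2 * u)), div_nonneg hv2 (by linarith : (0:ℝ) ≤ 2 * u),
      mul_div_cancel₀ (b ^ 2 * (1 - s ^ 2)) (by positivity : (2*u) ≠ 0)]
  have hab : 0 < a - b := by linarith
  have hrhs : 1 - b ^ 2 / (2 * a ^ 2) * (1 - s ^ 2) / (1 - b / a) ^ 2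
      = 1 - b ^ 2 * (1 - s ^ 2) / (2 * (a - b) ^ 2) := by
    have h : 1 - b / a = (a - b) / a := by field_simp
    rw [h]
    field_simp
  have hlhs : (a ^ 2 + s * b * a) / (N * a) = u / N := by
    rw [hu_def]; field_simp
  rw [hrhs, hlhs, ge_iff_le]
  have huab : a - b ≤ u := by nlinarith [mul_nonneg (by linarith : (0:ℝ) ≤ 1 + s) hb]
  have h1 : b ^ 2 * (1 - s ^ 2) / (2 * u ^ 2) ≤ b ^ 2 * (1 - s ^ 2) / (2 * (a - b) ^ 2) := by
    have hu2 : 2 * (a - b) ^ 2 ≤ 2 * u ^ 2 := by nlinarith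
    gcongr
  have hM : 0 < u + b ^ 2 * (1 - s ^ 2) / (2 * u) := by positivity
  have step1 : u / (u + b ^ 2 * (1 - s ^ 2) / (2 * u)) ≤ u / N := by
    gcongr
  have hid : (1 - b ^ 2 * (1 - s ^ 2) / (2 * u ^ 2)) * (u + b ^ 2 * (1 - s ^ 2) / (2 * u))
      = u - (b ^ 2 * (1 - s ^ 2)) ^ 2 / (4 * u ^ 3) := by
    field_simp
    ring
  have step2 : 1 - b ^ 2 * (1 - s ^ 2) / (2 * u ^ 2)
      ≤ u / (u + b ^ 2 * (1 - s ^ 2) / (2 * u)) := by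
    rw [le_div_iff₀ hM, hid]
    have : 0 ≤ (b ^ 2 * (1 - s ^ 2)) ^ 2 / (4 * u ^ 3) := by positivity
    linarith
  linarith

/-- Non-asymptotic directional-noise bound: for `G = g + ε Z` with `ε ‖Z‖ < ‖g‖`,
`⟨G, g⟩/(‖G‖ ‖g‖) ≥ 1 - (ε² ‖Z‖² / (2‖g‖²)) (1 - cos²θ) / (1 - ε‖Z‖/‖g‖)²`. -/
theorem stmt16 {m : ℕ} (g Z : EuclideanSpace ℝ (Fin m)) (hg : g ≠ 0)
    (ε : ℝ) (hε : 0 < ε) (hsmall : ε * ‖Z‖ < ‖g‖)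
    (cosθ : ℝ) (hcos : cosθ = ⟪Z, g⟫ / (‖Z‖ * ‖g‖)) :
    ⟪g + ε • Z, g⟫ / (‖g + ε • Z‖ * ‖g‖)
      ≥ 1 - ε ^ 2 * ‖Z‖ ^ 2 / (2 * ‖g‖ ^ 2) * (1 - cosθ ^ 2)
          / (1 - ε * ‖Z‖ / ‖g‖) ^ 2 := by
  have ha : 0 < ‖g‖ := norm_pos_iff.mpr hg
  have hcs : |⟪Z, g⟫| ≤ ‖Z‖ * ‖g‖ := abs_real_inner_le_norm Z g
  have hc : ⟪Z, g⟫ = cosθ * (‖Z‖ * ‖g‖) := by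
    rcases eq_or_ne ‖Z‖ 0 with hz | hz
    · have h0 : ⟪Z, g⟫ = 0 := abs_nonpos_iff.mp (by rw [hz] at hcs; simpa using hcs)
      simp [h0, hz]
    · rw [hcos]; field_simp
  have hs : |cosθ| ≤ 1 := by
    rcases eq_or_ne ‖Z‖ 0 with hz | hz
    · have h0 : ⟪Z, g⟫ = 0 := abs_nonpos_iff.mp (by rw [hz] at hcs; simpa using hcs)
      rw [hcos, h0]; simp
    · rw [hcos, abs_div, div_le_one (by positivity : (0:ℝ) < |‖Z‖ * ‖g‖|)]
      calc |⟪Z, g⟫| ≤ ‖Z‖ * ‖g‖ := hcs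
        _ = |‖Z‖ * ‖g‖| := (abs_of_nonneg (by positivity)).symm
  have hinner : ⟪g + ε • Z, g⟫ = ‖g‖ ^ 2 + cosθ * (ε * ‖Z‖) * ‖g‖ := by
    rw [inner_add_left, real_inner_smul_left, hc, real_inner_self_eq_norm_sq]
    ring
  have hnormsq : ‖g + ε • Z‖ ^ 2 = ‖g‖ ^ 2 + 2 * cosθ * (ε * ‖Z‖) * ‖g‖ + (ε * ‖Z‖) ^ 2 := by
    rw [norm_add_sq_real, real_inner_smul_right, real_inner_comm, hc, norm_smul]
    simp [abs_of_pos hε]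
    ring
  have key := stmt16_aux ‖g‖ (ε * ‖Z‖) cosθ ‖g + ε • Z‖ ha (by positivity) hsmall hs
    (norm_nonneg _) hnormsq
  rw [hinner]
  calc 1 - ε ^ 2 * ‖Z‖ ^ 2 / (2 * ‖g‖ ^ 2) * (1 - cosθ ^ 2) / (1 - ε * ‖Z‖ / ‖g‖) ^ 2
      = 1 - (ε * ‖Z‖) ^ 2 / (2 * ‖g‖ ^ 2) * (1 - cosθ ^ 2) / (1 - ε * ‖Z‖ / ‖g‖) ^ 2 := by
        ring
    _ ≤ (‖g‖ ^ 2 + cosθ * (ε * ‖Z‖) * ‖g‖) / (‖g + ε • Z‖ * ‖g‖) := key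
end

section
/- Multiclass PCNGD descent inequality: let f⁰, …, f^{L-1} be L₂-smooth with ∇f^i(x_t) ≠ 0 for all i, and x_{t+1} = x_t - η_t Σ_i ∇f^i(x_t)/‖∇f^i(x_t)‖. Then for class 0 (assuming s := Σ_{i≠0} ∇f^i(x_t)/‖∇f^i(x_t)‖ ≠ 0): f⁰(x_{t+1}) ≤ f⁰(x_t) - η_t(1 + ‖s‖cos α(x_t))‖∇f⁰(x_t)‖ + (L₂/2)L² η_t², where α(x_t) is the angle between ∇f⁰(x_t) and s. -/
open RealInnerProductSpace

/-! The descent lemma `f y ≤ f x + ⟪∇f x, y - x⟫ + K/2 ‖y - x‖²` for a `K`-Lipschitz gradient holds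
because, along the segment from `x` to `y`, `f` minus its quadratic model has nonpositive
derivative. For the PCNGD step `y - x = -η d`, the direction `d` is the unit gradient of class `0`
plus `s`, so `⟪∇f⁰, d⟫ = ‖∇f⁰‖ + ‖s‖ cos α ‖∇f⁰‖`; and `d` is a sum of `L` vectors of norm at
most `1`, so `‖y - x‖² ≤ L² η²`. -/

section Smooth

variable {E : Type*} [NormedAddCommGroup E] [InnerProductSpace ℝ E] [CompleteSpace E]
  {f : E → ℝ} {K : NNReal}

theorem LipschitzWith.apply_le_add_inner_gradient_add_sq (hf : Differentiable ℝ f)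
    (hlip : LipschitzWith K (gradient f)) (x y : E) :
    f y ≤ f x + ⟪gradient f x, y - x⟫ + K / 2 * ‖y - x‖ ^ 2 := by
  set v := y - x
  set h : ℝ → ℝ := fun τ => f (x + τ • v) - τ * ⟪gradient f x, v⟫ - K / 2 * τ ^ 2 * ‖v‖ ^ 2
  have hderiv : ∀ τ : ℝ, HasDerivAt h
      (⟪gradient f (x + τ • v), v⟫ - ⟪gradient f x, v⟫ - K * τ * ‖v‖ ^ 2) τ := by
    intro τ
    have hline : HasDerivAt (fun τ : ℝ => x + τ • v) v τ := by
      simpa using ((hasDerivAt_id τ).smul_const v).const_add x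
    have hfline := (hf (x + τ • v)).hasGradientAt.hasFDerivAt.comp_hasDerivAt τ hline
    rw [InnerProductSpace.toDual_apply_apply] at hfline
    refine ((hfline.sub ((hasDerivAt_id τ).mul_const _)).sub
      (((hasDerivAt_pow 2 τ).const_mul (K / 2 : ℝ)).mul_const (‖v‖ ^ 2))).congr_deriv ?_
    push_cast
    ring
  have hderiv_nonpos : ∀ τ ∈ interior (Set.Ici (0 : ℝ)),
      ⟪gradient f (x + τ • v), v⟫ - ⟪gradient f x, v⟫ - K * τ * ‖v‖ ^ 2 ≤ 0 := by
    intro τ hτ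
    rw [interior_Ici] at hτ
    have hgrad : ‖gradient f (x + τ • v) - gradient f x‖ ≤ K * (τ * ‖v‖) := by
      simpa [norm_smul, abs_of_pos (Set.mem_Ioi.mp hτ)] using hlip.norm_sub_le (x + τ • v) x
    have hcs := real_inner_le_norm (gradient f (x + τ • v) - gradient f x) v
    rw [inner_sub_left] at hcs
    nlinarith [mul_le_mul_of_nonneg_right hgrad (norm_nonneg v)]
  have hanti : AntitoneOn h (Set.Ici 0) :=
    antitoneOn_of_hasDerivWithinAt_nonpos (convex_Ici 0)
      (fun τ _ => (hderiv τ).continuousAt.continuousWithinAt)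
      (fun τ _ => (hderiv τ).hasDerivWithinAt) hderiv_nonpos
  have hh := hanti Set.self_mem_Ici (zero_le_one' ℝ) zero_le_one
  simp only [h, one_smul, zero_smul, add_zero, v, add_sub_cancel] at hh
  linarith

end Smooth

section Normalized

variable {E : Type*} [NormedAddCommGroup E] [InnerProductSpace ℝ E]

theorem norm_inv_norm_smul_le_one (v : E) : ‖‖v‖⁻¹ • v‖ ≤ 1 := by
  rcases eq_or_ne v 0 with rfl | hv
  · simp
  · exact (norm_smul_inv_norm hv).le

theorem real_inner_inv_norm_smul_self (v : E) : ⟪v, ‖v‖⁻¹ • v⟫ = ‖v‖ := by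
  rw [real_inner_smul_right, real_inner_self_eq_norm_sq, sq, ← mul_assoc, inv_mul_mul_self]

theorem norm_sum_inv_norm_smul_le_card {ι : Type*} (s : Finset ι) (v : ι → E) :
    ‖∑ i ∈ s, ‖v i‖⁻¹ • v i‖ ≤ s.card := by
  calc ‖∑ i ∈ s, ‖v i‖⁻¹ • v i‖ ≤ ∑ i ∈ s, ‖‖v i‖⁻¹ • v i‖ := norm_sum_le _ _
    _ ≤ ∑ i ∈ s, (1 : ℝ) := Finset.sum_le_sum fun i _ => norm_inv_norm_smul_le_one (v i)
    _ = s.card := by simp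

end Normalized

theorem stmt18_general {m L : ℕ} (hL : 0 < L)
    (f : Fin L → (EuclideanSpace ℝ (Fin m) → ℝ)) (L2 : ℝ) (hL2 : 0 ≤ L2)
    (hdiff : ∀ i, Differentiable ℝ (f i))
    (hlip : ∀ i, LipschitzWith ⟨L2, hL2⟩ (gradient (f i)))
    (x : ℕ → EuclideanSpace ℝ (Fin m)) (η : ℕ → ℝ) (t : ℕ)
    (s : EuclideanSpace ℝ (Fin m))
    (hs : s = ∑ i ∈ Finset.univ.erase (⟨0, hL⟩ : Fin L),
      ‖gradient (f i) (x t)‖⁻¹ • gradient (f i) (x t))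
    (cosα : ℝ)
    (hcos : cosα = ⟪gradient (f ⟨0, hL⟩) (x t), s⟫ /
      (‖gradient (f ⟨0, hL⟩) (x t)‖ * ‖s‖))
    (hstep : x (t + 1) = x t
      - η t • ∑ i, ‖gradient (f i) (x t)‖⁻¹ • gradient (f i) (x t)) :
    f ⟨0, hL⟩ (x (t + 1)) ≤ f ⟨0, hL⟩ (x t)
      - η t * (1 + ‖s‖ * cosα) * ‖gradient (f ⟨0, hL⟩) (x t)‖
      + (L2 / 2) * (L : ℝ) ^ 2 * (η t) ^ 2 := by
  set g := gradient (f ⟨0, hL⟩) (x t)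
  set d := ∑ i, ‖gradient (f i) (x t)‖⁻¹ • gradient (f i) (x t)
  have hdisp : x (t + 1) - x t = -η t • d := by
    rw [hstep, neg_smul, sub_sub_cancel_left]
  have hsplit : d = ‖g‖⁻¹ • g + s := by
    rw [hs]
    exact (Finset.add_sum_erase _ _ (Finset.mem_univ _)).symm
  have hcos_mul : ⟪g, s⟫ = cosα * (‖g‖ * ‖s‖) := by
    rw [hcos, ← InnerProductGeometry.cos_angle, InnerProductGeometry.cos_angle_mul_norm_mul_norm]
  have hinner : ⟪g, d⟫ = (1 + ‖s‖ * cosα) * ‖g‖ := by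
    rw [hsplit, inner_add_right, real_inner_inv_norm_smul_self, hcos_mul]
    ring
  have hd : ‖d‖ ≤ L := by
    simpa using norm_sum_inv_norm_smul_le_card Finset.univ fun i => gradient (f i) (x t)
  have hstep_sq : ‖-η t • d‖ ^ 2 ≤ (L : ℝ) ^ 2 * η t ^ 2 := by
    calc ‖-η t • d‖ ^ 2 = η t ^ 2 * ‖d‖ ^ 2 := by
          rw [norm_smul, norm_neg, mul_pow, Real.norm_eq_abs, sq_abs]
      _ ≤ η t ^ 2 * (L : ℝ) ^ 2 := by gcongr
      _ = (L : ℝ) ^ 2 * η t ^ 2 := mul_comm _ _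
  have hdescent : f ⟨0, hL⟩ (x (t + 1)) ≤
      f ⟨0, hL⟩ (x t) + ⟪g, x (t + 1) - x t⟫ + L2 / 2 * ‖x (t + 1) - x t‖ ^ 2 :=
    (hlip ⟨0, hL⟩).apply_le_add_inner_gradient_add_sq (hdiff ⟨0, hL⟩) (x t) (x (t + 1))
  rw [hdisp, real_inner_smul_right, hinner] at hdescent
  have hquad : L2 / 2 * ‖-η t • d‖ ^ 2 ≤ L2 / 2 * ((L : ℝ) ^ 2 * η t ^ 2) := by gcongr
  linarith

/-- Multiclass PCNGD descent inequality for class `0`: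
`f⁰(x_{t+1}) ≤ f⁰(x_t) - η_t (1 + ‖s‖ cos α(x_t)) ‖∇f⁰(x_t)‖ + (L₂/2) L² η_t²`. -/
theorem stmt18 {m L : ℕ} (hL : 0 < L)
    (f : Fin L → (EuclideanSpace ℝ (Fin m) → ℝ)) (L2 : ℝ) (hL2 : 0 ≤ L2)
    (hdiff : ∀ i, Differentiable ℝ (f i))
    (hlip : ∀ i, LipschitzWith ⟨L2, hL2⟩ (gradient (f i)))
    (x : ℕ → EuclideanSpace ℝ (Fin m)) (η : ℕ → ℝ) (t : ℕ)
    (hg : ∀ i, gradient (f i) (x t) ≠ 0)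
    (s : EuclideanSpace ℝ (Fin m))
    (hs : s = ∑ i ∈ Finset.univ.erase (⟨0, hL⟩ : Fin L),
      ‖gradient (f i) (x t)‖⁻¹ • gradient (f i) (x t))
    (hsne : s ≠ 0)
    (cosα : ℝ)
    (hcos : cosα = ⟪gradient (f ⟨0, hL⟩) (x t), s⟫ /
      (‖gradient (f ⟨0, hL⟩) (x t)‖ * ‖s‖))
    (hstep : x (t + 1) = x t
      - η t • ∑ i, ‖gradient (f i) (x t)‖⁻¹ • gradient (f i) (x t)) :
    f ⟨0, hL⟩ (x (t + 1)) ≤ f ⟨0, hL⟩ (x t)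
      - η t * (1 + ‖s‖ * cosα) * ‖gradient (f ⟨0, hL⟩) (x t)‖
      + (L2 / 2) * (L : ℝ) ^ 2 * (η t) ^ 2 :=
  stmt18_general hL f L2 hL2 hdiff hlip x η t s hs cosα hcos hstep
end
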